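/- arXiv:1712.02252 — 3 statements merged into one kernel-verified Lean document; each statement's English description precedes it below -/
import Mathlib

section
/- Uniqueness of the Harder–Narasimhan filtration (Proposition B.1): Let D be a triangulated category equipped with a slicing P. Then the Harder–Narasimhan filtration of any nonzero object of D is unique up to isomorphism of the semistable factors. Precisely: if a nonzero object E admits two HN filtrations, one with objects 0 = E0, …, En = E, semistable factors A1 ∈ P(φ1), …, An ∈ P(φn) and phases φ1 > … > φn, and another with objects 0 = E'0, …, E'm = E, semistable factors A'1 ∈ P(φ'1), …, A'm ∈ P(φ'm) and phases φ'1 > … > φ'm, then n = m, φj = φ'j for all j = 1, …, n, and Aj is isomorphic to A'j for all j = 1, …, n. -/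
open CategoryTheory Category Limits Pretriangulated

universe v u

variable {D : Type u} [Category.{v} D] [Preadditive D] [HasZeroObject D]
  [HasShift D ℤ] [∀ n : ℤ, (shiftFunctor D n).Additive] [Pretriangulated D]

/-- A Harder–Narasimhan filtration of an object `E` with respect to a family
of classes of objects `P : ℝ → Set D`:  an integer `n ≥ 1`, objects
`0 = filtObj 0, filtObj 1, …, filtObj n = E`, nonzero semistable factors
`factor j ∈ P (phase j)` for `1 ≤ j ≤ n`, strictly decreasing phases
`phase 1 > phase 2 > … > phase n`, and distinguished triangles
`filtObj (j-1) ⟶ filtObj j ⟶ factor j ⟶ (filtObj (j-1))⟦1⟧`. -/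
structure HNFiltration (P : ℝ → Set D) (E : D) where
  n : ℕ
  one_le_n : 1 ≤ n
  filtObj : ℕ → D
  factor : ℕ → D
  phase : ℕ → ℝ
  isZero_filtObj_zero : IsZero (filtObj 0)
  filtObj_n : filtObj n = E
  phase_strictAnti : ∀ j, 1 ≤ j → j < n → phase (j + 1) < phase j
  factor_nonzero : ∀ j, 1 ≤ j → j ≤ n → ¬ IsZero (factor j)
  factor_mem : ∀ j, 1 ≤ j → j ≤ n → factor j ∈ P (phase j)
  triangle : ∀ j, 1 ≤ j → j ≤ n →
    ∃ (f : filtObj (j - 1) ⟶ filtObj j) (g : filtObj j ⟶ factor j)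
      (h : factor j ⟶ (filtObj (j - 1))⟦(1 : ℤ)⟧),
        Triangle.mk f g h ∈ distTriang D

/-- A slicing on a (pre)triangulated category `D`:  for each real number `φ`
a class `P φ` of objects (the semistable objects of phase `φ`), closed under
isomorphism, containing the zero objects and closed under finite direct sums,
such that (A2) `P (φ + 1) = P φ ⟦1⟧`, (A3) there are no nonzero morphisms from
semistables of bigger phase to semistables of smaller phase, and (A4) every
nonzero object admits a Harder–Narasimhan filtration. -/
structure Slicing (D : Type u) [Category.{v} D] [Preadditive D] [HasZeroObject D]
    [HasShift D ℤ] [∀ n : ℤ, (shiftFunctor D n).Additive] [Pretriangulated D] where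
  P : ℝ → Set D
  mem_of_iso : ∀ (φ : ℝ) (X Y : D), (X ≅ Y) → X ∈ P φ → Y ∈ P φ
  zero_mem : ∀ (φ : ℝ) (X : D), IsZero X → X ∈ P φ
  sum_mem : ∀ (φ : ℝ) (X Y : D) (b : BinaryBicone X Y), b.IsBilimit →
    X ∈ P φ → Y ∈ P φ → b.pt ∈ P φ
  shift_mem : ∀ (φ : ℝ) (X : D), X ∈ P (φ + 1) ↔ ∃ Y ∈ P φ, Nonempty (X ≅ Y⟦(1 : ℤ)⟧)
  hom_zero : ∀ (φ₁ φ₂ : ℝ), φ₂ < φ₁ → ∀ (A₁ A₂ : D), A₁ ∈ P φ₁ → A₂ ∈ P φ₂ →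
    ∀ f : A₁ ⟶ A₂, f = 0
  hn_exists : ∀ E : D, ¬ IsZero E → Nonempty (HNFiltration P E)

/-!
Compare two HN filtrations from the top down. If `E_k ≅ E'_l`, the last triangles
`E_{k-1} → E_k → A_k` and `E'_{l-1} → E'_l → A'_l` are both "orthogonal": every map from
`E_{k-1}` (or `E_{k-1}⟦1⟧`) to a semistable object of phase at most `φ_k` vanishes, since
`E_{k-1}` is an iterated extension of semistables of larger phase. Comparing the top maps
`E_k → A'_l` shows `φ_k = φ'_l`, and then orthogonality makes both triangles unique up to
isomorphism, so `A_k ≅ A'_l` and `E_{k-1} ≅ E'_{l-1}`; induct downwards.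
-/

namespace CategoryTheory.Pretriangulated

lemma cancel_mor₂_of_hom_eq_zero {T : Triangle D} (hT : T ∈ distTriang D) {W : D}
    (hW : ∀ f : T.obj₁⟦(1 : ℤ)⟧ ⟶ W, f = 0) {a b : T.obj₃ ⟶ W}
    (h : T.mor₂ ≫ a = T.mor₂ ≫ b) : a = b := by
  obtain ⟨w, hw⟩ := Triangle.yoneda_exact₃ T hT (a - b) (by rw [Preadditive.comp_sub, h, sub_self])
  rw [← sub_eq_zero, hw, hW w, comp_zero]

lemma nonempty_triangle_iso_of_hom_eq_zero {T T' : Triangle D} (hT : T ∈ distTriang D)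
    (hT' : T' ∈ distTriang D) (e : T.obj₂ ≅ T'.obj₂)
    (h₁ : ∀ f : T.obj₁ ⟶ T'.obj₃, f = 0) (h₁' : ∀ f : T'.obj₁ ⟶ T.obj₃, f = 0)
    (h₃ : ∀ f : T.obj₁⟦(1 : ℤ)⟧ ⟶ T.obj₃, f = 0)
    (h₃' : ∀ f : T'.obj₁⟦(1 : ℤ)⟧ ⟶ T'.obj₃, f = 0) :
    Nonempty (T ≅ T') := by
  obtain ⟨v, hv⟩ := Triangle.yoneda_exact₂ T hT (e.hom ≫ T'.mor₂) (h₁ _)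
  obtain ⟨u, hu⟩ := Triangle.yoneda_exact₂ T' hT' (e.inv ≫ T.mor₂) (h₁' _)
  have hvu : v ≫ u = 𝟙 _ := cancel_mor₂_of_hom_eq_zero hT h₃
    (by rw [← assoc, ← hv, assoc, ← hu, e.hom_inv_id_assoc, comp_id])
  have huv : u ≫ v = 𝟙 _ := cancel_mor₂_of_hom_eq_zero hT' h₃'
    (by rw [← assoc, ← hu, assoc, ← hv, e.inv_hom_id_assoc, comp_id])
  obtain ⟨eRot, -⟩ := exists_iso_of_arrow_iso T.rotate T'.rotate
    (rot_of_distTriang T hT) (rot_of_distTriang T' hT')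
    (Arrow.isoMk e ⟨v, u, hvu, huv⟩ hv)
  exact ⟨(triangleRotation D).fullyFaithfulFunctor.preimageIso eRot⟩

end CategoryTheory.Pretriangulated

namespace Slicing

lemma shift_hom_eq_zero (S : Slicing D) {X : D} {ψ : ℝ}
    (hX : ∀ Y ∈ S.P (ψ - 1), ∀ f : X ⟶ Y, f = 0) {Y : D} (hY : Y ∈ S.P ψ)
    (f : X⟦(1 : ℤ)⟧ ⟶ Y) : f = 0 := by
  obtain ⟨Y', hY', ⟨e⟩⟩ := (S.shift_mem (ψ - 1) Y).1 (by rwa [sub_add_cancel])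
  have hf : f ≫ e.hom = 0 := by
    rw [← (shiftFunctor D (1 : ℤ)).map_preimage (f ≫ e.hom),
      hX Y' hY' ((shiftFunctor D (1 : ℤ)).preimage (f ≫ e.hom)), Functor.map_zero]
  simpa using hf =≫ e.inv

end Slicing

namespace HNFiltration

variable {S : Slicing D} {E E' : D} (F : HNFiltration S.P E) (F' : HNFiltration S.P E')
  {k k' : ℕ}

lemma phase_le {i j : ℕ} (hi : 1 ≤ i) (hij : i ≤ j) (hj : j ≤ F.n) :
    F.phase j ≤ F.phase i := by
  induction j, hij using Nat.le_induction with
  | base => rfl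
  | succ j hij ih => exact (F.phase_strictAnti j (hi.trans hij) hj).le.trans (ih (by omega))

lemma phase_lt {i j : ℕ} (hi : 1 ≤ i) (hij : i < j) (hj : j ≤ F.n) :
    F.phase j < F.phase i :=
  (F.phase_le (by omega) hij hj).trans_lt (F.phase_strictAnti i hi (by omega))

lemma hom_eq_zero (hk : k ≤ F.n) {ψ : ℝ} (hψ : ∀ i, 1 ≤ i → i ≤ k → ψ < F.phase i)
    {Y : D} (hY : Y ∈ S.P ψ) (u : F.filtObj k ⟶ Y) : u = 0 := by
  induction k with
  | zero => exact F.isZero_filtObj_zero.eq_of_src u 0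
  | succ k ih =>
    obtain ⟨f, g, h, hT⟩ := F.triangle (k + 1) (by omega) hk
    obtain ⟨v, hv⟩ := Triangle.yoneda_exact₂ _ hT u
      (ih (by omega) (fun i hi hik => hψ i hi (by omega)) (f ≫ u))
    rw [hv, S.hom_zero _ _ (hψ (k + 1) (by omega) le_rfl) _ _ (F.factor_mem _ (by omega) hk) hY v]
    exact comp_zero

lemma filtObj_pred_hom_eq_zero (hk₁ : 1 ≤ k) (hk : k ≤ F.n) {Y : D}
    (hY : Y ∈ S.P (F.phase k)) (u : F.filtObj (k - 1) ⟶ Y) : u = 0 :=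
  F.hom_eq_zero (by omega) (fun _ hi hik => F.phase_lt hi (by omega) hk) hY u

lemma shift_filtObj_pred_hom_eq_zero (hk₁ : 1 ≤ k) (hk : k ≤ F.n) {Y : D}
    (hY : Y ∈ S.P (F.phase k)) (u : (F.filtObj (k - 1))⟦(1 : ℤ)⟧ ⟶ Y) : u = 0 :=
  S.shift_hom_eq_zero (fun _ hY' => F.hom_eq_zero (by omega)
    (fun i hi hik => by linarith [F.phase_lt hi (by omega : i < k) hk]) hY') hY u

lemma mor₂_ne_zero (hk₁ : 1 ≤ k) (hk : k ≤ F.n) {f : F.filtObj (k - 1) ⟶ F.filtObj k}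
    {g : F.filtObj k ⟶ F.factor k} {h : F.factor k ⟶ (F.filtObj (k - 1))⟦(1 : ℤ)⟧}
    (hT : Triangle.mk f g h ∈ distTriang D) : g ≠ 0 := by
  intro hg
  refine F.factor_nonzero k hk₁ hk ((IsZero.iff_id_eq_zero _).2 ?_)
  exact cancel_mor₂_of_hom_eq_zero hT
    (F.shift_filtObj_pred_hom_eq_zero hk₁ hk (F.factor_mem k hk₁ hk))
    (show g ≫ 𝟙 _ = g ≫ 0 by simp [hg])

lemma not_isZero_filtObj (hk₁ : 1 ≤ k) (hk : k ≤ F.n) : ¬ IsZero (F.filtObj k) := fun hz => by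
  obtain ⟨_, g, _, hT⟩ := F.triangle k hk₁ hk
  exact F.mor₂_ne_zero hk₁ hk hT (hz.eq_of_src g 0)

lemma phase_le_of_iso (hk : k ≤ F.n) (hk'₁ : 1 ≤ k') (hk' : k' ≤ F'.n)
    (e : F.filtObj k ≅ F'.filtObj k') : F.phase k ≤ F'.phase k' := by
  by_contra! hlt
  obtain ⟨_, g, _, hT⟩ := F'.triangle k' hk'₁ hk'
  have h0 : e.hom ≫ g = 0 := F.hom_eq_zero hk
    (fun i hi hik => hlt.trans_le (F.phase_le hi hik hk)) (F'.factor_mem k' hk'₁ hk') _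
  exact F'.mor₂_ne_zero hk'₁ hk' hT (by simpa using e.inv ≫= h0)

lemma exists_isos_of_iso (hk₁ : 1 ≤ k) (hk : k ≤ F.n) (hk'₁ : 1 ≤ k') (hk' : k' ≤ F'.n)
    (e : F.filtObj k ≅ F'.filtObj k') :
    F.phase k = F'.phase k' ∧ Nonempty (F.factor k ≅ F'.factor k') ∧
      Nonempty (F.filtObj (k - 1) ≅ F'.filtObj (k' - 1)) := by
  have hφ : F.phase k = F'.phase k' :=
    (F.phase_le_of_iso F' hk hk'₁ hk' e).antisymm (F'.phase_le_of_iso F hk' hk₁ hk e.symm)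
  obtain ⟨f, g, h, hT⟩ := F.triangle k hk₁ hk
  obtain ⟨f', g', h', hT'⟩ := F'.triangle k' hk'₁ hk'
  obtain ⟨eT⟩ := nonempty_triangle_iso_of_hom_eq_zero hT hT' e
    (F.filtObj_pred_hom_eq_zero hk₁ hk (hφ ▸ F'.factor_mem k' hk'₁ hk'))
    (F'.filtObj_pred_hom_eq_zero hk'₁ hk' (hφ ▸ F.factor_mem k hk₁ hk))
    (F.shift_filtObj_pred_hom_eq_zero hk₁ hk (F.factor_mem k hk₁ hk))
    (F'.shift_filtObj_pred_hom_eq_zero hk'₁ hk' (F'.factor_mem k' hk'₁ hk'))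
  exact ⟨hφ, ⟨Triangle.π₃.mapIso eT⟩, ⟨Triangle.π₁.mapIso eT⟩⟩

lemma agree_of_filtObj_iso (hk : k ≤ F.n) (hk' : k' ≤ F'.n)
    (e : F.filtObj k ≅ F'.filtObj k') :
    k = k' ∧ ∀ j, 1 ≤ j → j ≤ k →
      F.phase j = F'.phase j ∧ Nonempty (F.factor j ≅ F'.factor j) := by
  induction k generalizing k' with
  | zero =>
    refine ⟨?_, fun j hj hjk => by omega⟩
    by_contra hk'₀
    exact F'.not_isZero_filtObj (by omega) hk' (F.isZero_filtObj_zero.of_iso e.symm)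
  | succ k ih =>
    obtain _ | k' := k'
    · exact absurd (F'.isZero_filtObj_zero.of_iso e) (F.not_isZero_filtObj (by omega) hk)
    obtain ⟨hφ, ⟨eA⟩, ⟨e₀⟩⟩ := F.exists_isos_of_iso F' (by omega) hk (by omega) hk' e
    obtain ⟨rfl, hbelow⟩ := ih (by omega) (by omega) e₀
    refine ⟨rfl, fun j hj hjk => ?_⟩
    obtain hjk | rfl := Nat.of_le_succ hjk
    · exact hbelow j hj hjk
    · exact ⟨hφ, ⟨eA⟩⟩

end HNFiltration

theorem hn_filtration_unique_general (S : Slicing D) (E : D) (F₁ F₂ : HNFiltration S.P E) :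
    F₁.n = F₂.n ∧
      ∀ j, 1 ≤ j → j ≤ F₁.n →
        F₁.phase j = F₂.phase j ∧ Nonempty (F₁.factor j ≅ F₂.factor j) :=
  F₁.agree_of_filtObj_iso F₂ le_rfl le_rfl (eqToIso (F₁.filtObj_n.trans F₂.filtObj_n.symm))

/-- Proposition B.1: the Harder–Narasimhan filtration of any nonzero object of a
triangulated category equipped with a slicing is unique up to isomorphism of the
semistable factors. -/
theorem hn_filtration_unique [IsTriangulated D] (S : Slicing D) (E : D)
    (hE : ¬ IsZero E) (F₁ F₂ : HNFiltration S.P E) :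
    F₁.n = F₂.n ∧
      ∀ j, 1 ≤ j → j ≤ F₁.n →
        F₁.phase j = F₂.phase j ∧ Nonempty (F₁.factor j ≅ F₂.factor j) :=
  hn_filtration_unique_general S E F₁ F₂
end

section
/- Lemma B.5: Let D be a triangulated category equipped with a slicing P and let E be a nonzero object of D. Suppose E has two HN filtrations: one with semistable factors Aj ∈ P(φj) (j = 1, …, n) and phases φ1 > … > φn, and another with semistable factors A'k ∈ P(φ'k) (k = 1, …, m) and phases φ'1 > … > φ'm. Then the maximal phases agree: φ1 = φ'1. -/
open CategoryTheory Category Limits Pretriangulated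

universe v u

variable {D : Type u} [Category.{v} D] [Preadditive D] [HasZeroObject D]
  [HasShift D ℤ] [∀ n : ℤ, (shiftFunctor D n).Additive] [Pretriangulated D]

/-!
Let `X₁ ⊆ E` be the first step of an HN filtration, so `X₁ ∈ P(φ₁)`. Inductively along the
filtration the map `X₁ → E` stays nonzero: the obstruction at step `k` would be a morphism
`X₁ → A_k⟦-1⟧` with `A_k⟦-1⟧ ∈ P(φ_k - 1)` and `φ_k - 1 < φ₁`. On the other hand, by induction
along any HN filtration of `E`, every morphism into `E` from a semistable object of phase
bigger than its first phase `φ'₁` vanishes. Hence `φ₁ ≤ φ'₁`, and symmetrically.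
-/

namespace HNFiltration

variable {P : ℝ → Set D} {E : D} (F : HNFiltration P E)

lemma phase_le_phase_one {j : ℕ} (hj : 1 ≤ j) (hjn : j ≤ F.n) : F.phase j ≤ F.phase 1 := by
  induction j, hj using Nat.le_induction with
  | base => exact le_rfl
  | succ k hk ih => exact (F.phase_strictAnti k hk hjn).le.trans (ih (by omega))

lemma nonempty_iso_filtObj_one_factor_one : Nonempty (F.filtObj 1 ≅ F.factor 1) := by
  obtain ⟨_, g, _, hT⟩ := F.triangle 1 le_rfl F.one_le_n
  have : IsIso g := (Triangle.isZero₁_iff_isIso₂ _ hT).1 F.isZero_filtObj_zero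
  exact ⟨asIso g⟩

lemma not_isZero_filtObj_one : ¬ IsZero (F.filtObj 1) := fun h =>
  F.factor_nonzero 1 le_rfl F.one_le_n (h.of_iso F.nonempty_iso_filtObj_one_factor_one.some.symm)

end HNFiltration

namespace Slicing

variable (S : Slicing D) {E : D}

lemma shift_neg_one_mem {ψ : ℝ} {B : D} (hB : B ∈ S.P ψ) : B⟦(-1 : ℤ)⟧ ∈ S.P (ψ - 1) := by
  obtain ⟨Y, hY, ⟨e⟩⟩ := (S.shift_mem (ψ - 1) B).1 (by rwa [sub_add_cancel])
  refine S.mem_of_iso _ _ _ ?_ hY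
  exact ((shiftFunctor D (-1 : ℤ)).mapIso e ≪≫
    (shiftFunctorCompIsoId D (1 : ℤ) (-1 : ℤ) (by norm_num)).app Y).symm

lemma filtObj_one_mem (F : HNFiltration S.P E) : F.filtObj 1 ∈ S.P (F.phase 1) :=
  S.mem_of_iso _ _ _ F.nonempty_iso_filtObj_one_factor_one.some.symm
    (F.factor_mem 1 le_rfl F.one_le_n)

lemma hom_filtObj_eq_zero (F : HNFiltration S.P E) {A : D} {φ : ℝ} (hA : A ∈ S.P φ)
    (hφ : F.phase 1 < φ) {k : ℕ} (hk : k ≤ F.n) (f : A ⟶ F.filtObj k) : f = 0 := by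
  induction k with
  | zero => exact F.isZero_filtObj_zero.eq_of_tgt f 0
  | succ k ih =>
    obtain ⟨u, v, _, hT⟩ := F.triangle (k + 1) (by omega) hk
    have hfv : f ≫ v = 0 :=
      S.hom_zero φ _ ((F.phase_le_phase_one (by omega) hk).trans_lt hφ) _ _ hA
        (F.factor_mem (k + 1) (by omega) hk) _
    obtain ⟨g, rfl⟩ := Triangle.coyoneda_exact₂ _ hT f hfv
    have hg : g = 0 := ih (by omega) g
    rw [hg]; exact zero_comp

lemma hom_eq_zero_of_phase_one_lt (F : HNFiltration S.P E) {A : D} {φ : ℝ} (hA : A ∈ S.P φ)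
    (hφ : F.phase 1 < φ) (f : A ⟶ E) : f = 0 := by
  have := S.hom_filtObj_eq_zero F hA hφ (k := F.n) le_rfl
  rw [F.filtObj_n] at this
  exact this f

lemma exists_hom_filtObj_ne_zero (F : HNFiltration S.P E) {k : ℕ} (hk : 1 ≤ k)
    (hkn : k ≤ F.n) : ∃ c : F.filtObj 1 ⟶ F.filtObj k, c ≠ 0 := by
  induction k, hk using Nat.le_induction with
  | base => exact ⟨𝟙 _, fun h => F.not_isZero_filtObj_one ((IsZero.iff_id_eq_zero _).2 h)⟩
  | succ k hk ih =>
    obtain ⟨c, hc⟩ := ih (by omega)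
    obtain ⟨u, _, _, hT⟩ := F.triangle (k + 1) (by omega) hkn
    refine ⟨c ≫ u, fun hcu => hc ?_⟩
    obtain ⟨g, rfl⟩ := Triangle.coyoneda_exact₂ _ (inv_rot_of_distTriang _ hT) c hcu
    have hlt : F.phase (k + 1) - 1 < F.phase 1 := by
      linarith [F.phase_le_phase_one (by omega) hkn]
    have hg : g = 0 := S.hom_zero _ _ hlt _ _ (S.filtObj_one_mem F)
      (S.shift_neg_one_mem (F.factor_mem (k + 1) (by omega) hkn)) g
    rw [hg]; exact zero_comp

lemma exists_hom_ne_zero (F : HNFiltration S.P E) : ∃ c : F.filtObj 1 ⟶ E, c ≠ 0 := by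
  have := S.exists_hom_filtObj_ne_zero F F.one_le_n le_rfl
  rwa [F.filtObj_n] at this

lemma phase_one_le (F₁ F₂ : HNFiltration S.P E) : F₁.phase 1 ≤ F₂.phase 1 := by
  obtain ⟨c, hc⟩ := S.exists_hom_ne_zero F₁
  exact le_of_not_gt fun hlt =>
    hc (S.hom_eq_zero_of_phase_one_lt F₂ (S.filtObj_one_mem F₁) hlt c)

end Slicing

theorem maxPhase_unique_general (S : Slicing D) (E : D) (F₁ F₂ : HNFiltration S.P E) :
    F₁.phase 1 = F₂.phase 1 :=
  le_antisymm (S.phase_one_le F₁ F₂) (S.phase_one_le F₂ F₁)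

/-- Lemma B.5: if a nonzero object `E` of a triangulated category with a slicing
has two HN filtrations, then their maximal phases agree: `φ₁ = φ'₁`. -/
theorem maxPhase_unique [IsTriangulated D] (S : Slicing D) (E : D)
    (hE : ¬ IsZero E) (F₁ F₂ : HNFiltration S.P E) :
    F₁.phase 1 = F₂.phase 1 :=
  maxPhase_unique_general S E F₁ F₂
end

section
/- Claim from the proof of Lemma B.5: Let D be a triangulated category equipped with a slicing P. Suppose a nonzero object E of D has an HN filtration with objects 0 = E0, E1, …, En = E, semistable factors A1 ∈ P(φ1), …, An ∈ P(φn), and phases φ1 > … > φn. Then the abelian group Hom(A1, E) is isomorphic to Hom(A1, A1); in particular, since A1 is nonzero, there exists a nonzero morphism A1 → E, i.e. Hom(A1, E) ≠ 0. -/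
open CategoryTheory Category Limits Pretriangulated

universe v u

variable {D : Type u} [Category.{v} D] [Preadditive D] [HasZeroObject D]
  [HasShift D ℤ] [∀ n : ℤ, (shiftFunctor D n).Additive] [Pretriangulated D]

/-!
Let `A = A₁`. Every later factor `Aⱼ` (`j ≥ 2`) has phase `φⱼ < φ₁`, and so does `Aⱼ⟦-1⟧`
(phase `φⱼ - 1`), so both `Hom(A, Aⱼ)` and `Hom(A, Aⱼ⟦-1⟧)` vanish by (A3). The long exact
`Hom(A, -)` sequence of `Eⱼ₋₁ → Eⱼ → Aⱼ → Eⱼ₋₁⟦1⟧` then makes `Hom(A, Eⱼ₋₁) → Hom(A, Eⱼ)` bijective,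
while `E₀ = 0` makes `Hom(A, E₁) → Hom(A, A₁)` bijective. Chaining these gives
`Hom(A, E) ≃ Hom(A, A)`, and the preimage of `𝟙 A ≠ 0` is a nonzero map `A ⟶ E`.
-/

lemma CategoryTheory.Pretriangulated.rightComp_mor₁_bijective {T : Triangle D}
    (hT : T ∈ distTriang D) (A : D) (h₃ : ∀ f : A ⟶ T.obj₃, f = 0)
    (h₃' : ∀ f : A ⟶ T.obj₃⟦(-1 : ℤ)⟧, f = 0) :
    Function.Bijective (Preadditive.rightComp A T.mor₁) := by
  refine ⟨(injective_iff_map_eq_zero _).2 fun g hg => ?_, fun f => ?_⟩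
  · obtain ⟨h, rfl⟩ := Triangle.coyoneda_exact₂ _ (inv_rot_of_distTriang _ hT) g hg
    rw [show h = 0 from h₃' h, zero_comp]
    rfl
  · obtain ⟨g, hg⟩ := Triangle.coyoneda_exact₂ _ hT f (h₃ _)
    exact ⟨g, hg.symm⟩

lemma Slicing.shift_neg_one_mem_s5 (S : Slicing D) {φ : ℝ} {Y : D} (hY : Y ∈ S.P φ) :
    Y⟦(-1 : ℤ)⟧ ∈ S.P (φ - 1) := by
  obtain ⟨Z, hZ, ⟨e⟩⟩ := (S.shift_mem (φ - 1) Y).1 (by simpa using hY)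
  exact S.mem_of_iso _ Z _
    (((shiftFunctorCompIsoId D (1 : ℤ) (-1) (by norm_num)).app Z).symm ≪≫
      ((shiftFunctor D (-1 : ℤ)).mapIso e).symm) hZ

lemma HNFiltration.phase_lt_phase_one {P : ℝ → Set D} {E : D} (F : HNFiltration P E)
    {j : ℕ} (h₂ : 2 ≤ j) (hj : j ≤ F.n) : F.phase j < F.phase 1 := by
  induction j, h₂ using Nat.le_induction with
  | base => exact F.phase_strictAnti 1 le_rfl hj
  | succ k _ ih =>
    exact (F.phase_strictAnti k (by omega) hj).trans (ih (by omega))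

lemma HNFiltration.nonempty_hom_filtObj_addEquiv (S : Slicing D) {E : D}
    (F : HNFiltration S.P E) {j : ℕ} (h₁ : 1 ≤ j) (hj : j ≤ F.n) :
    Nonempty ((F.factor 1 ⟶ F.filtObj j) ≃+ (F.factor 1 ⟶ F.factor 1)) := by
  set A := F.factor 1
  have hA : A ∈ S.P (F.phase 1) := F.factor_mem 1 le_rfl F.one_le_n
  induction j, h₁ using Nat.le_induction with
  | base =>
    obtain ⟨f, g, h, hT⟩ := F.triangle 1 le_rfl hj
    -- rotating `E₀ → E₁ → A₁ → E₀⟦1⟧` puts the zero object `E₀⟦1⟧` in third position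
    have hzero : IsZero ((F.filtObj 0)⟦(1 : ℤ)⟧) :=
      (shiftFunctor D (1 : ℤ)).map_isZero F.isZero_filtObj_zero
    exact ⟨AddEquiv.ofBijective _ (rightComp_mor₁_bijective (rot_of_distTriang _ hT) A
      (fun u => hzero.eq_of_tgt u 0)
      (fun u => ((shiftFunctor D (-1 : ℤ)).map_isZero hzero).eq_of_tgt u 0))⟩
  | succ k _ ih =>
    obtain ⟨e⟩ := ih (by omega)
    obtain ⟨f, g, h, hT⟩ := F.triangle (k + 1) (by omega) hj
    have hmem := F.factor_mem (k + 1) (by omega) hj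
    have hlt := F.phase_lt_phase_one (by omega : 2 ≤ k + 1) hj
    have hbij := rightComp_mor₁_bijective hT A (S.hom_zero _ _ hlt _ _ hA hmem)
      (S.hom_zero _ _ (by linarith) _ _ hA (S.shift_neg_one_mem_s5 hmem))
    exact ⟨(AddEquiv.ofBijective _ hbij).symm.trans e⟩

lemma exists_ne_zero_of_addEquiv_endomorphisms {C : Type*} [Category C] [Preadditive C]
    {A E : C} (e : (A ⟶ E) ≃+ (A ⟶ A)) (hA : ¬ IsZero A) : ∃ f : A ⟶ E, f ≠ 0 :=
  ⟨e.symm (𝟙 A), (map_ne_zero_iff e.symm e.symm.injective).2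
    fun h => hA ((IsZero.iff_id_eq_zero A).2 h)⟩

theorem hom_firstFactor_nonzero_general (S : Slicing D) (E : D)
    (F : HNFiltration S.P E) :
    Nonempty ((F.factor 1 ⟶ E) ≃+ (F.factor 1 ⟶ F.factor 1)) ∧
      ∃ f : F.factor 1 ⟶ E, f ≠ 0 := by
  obtain ⟨e⟩ := F.nonempty_hom_filtObj_addEquiv S F.one_le_n le_rfl
  rw [F.filtObj_n] at e
  exact ⟨⟨e⟩, exists_ne_zero_of_addEquiv_endomorphisms e (F.factor_nonzero 1 le_rfl F.one_le_n)⟩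

/-- Claim from the proof of Lemma B.5: if a nonzero object `E` of a triangulated
category with a slicing has an HN filtration with first semistable factor `A₁`,
then `Hom(A₁, E)` is isomorphic (as an abelian group) to `Hom(A₁, A₁)`; in
particular, since `A₁ ≠ 0`, there is a nonzero morphism `A₁ ⟶ E`. -/
theorem hom_firstFactor_nonzero [IsTriangulated D] (S : Slicing D) (E : D)
    (hE : ¬ IsZero E) (F : HNFiltration S.P E) :
    Nonempty ((F.factor 1 ⟶ E) ≃+ (F.factor 1 ⟶ F.factor 1)) ∧
      ∃ f : F.factor 1 ⟶ E, f ≠ 0 :=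
  hom_firstFactor_nonzero_general S E F
end
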